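/- Consider maps g from occupancy vectors ζ : Fin 3 → Bool to subsets g(ζ) ⊆ Fin 3 such that for every ζ: (i) g(ζ) ⊆ {i : ζ(i) = true}; (ii) g(ζ) contains no two adjacent indices (no i with both i and i+1 in g(ζ)); and (iii) the cardinality of g(ζ) equals the maximum cardinality of a subset of {i : ζ(i) = true} containing no two adjacent indices. The number of such maps is exactly 4. -/
import Mathlib


/-- A set of queues in the 3-queue path graph contains no two adjacent queues. -/
def NoTwoAdjacent (T : Finset (Fin 3)) : Prop :=
  ∀ (i : Fin 3) (h : (i : ℕ) + 1 < 3), ¬(i ∈ T ∧ (⟨(i : ℕ) + 1, h⟩ : Fin 3) ∈ T)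

/-- An occupancy-based Maximum Size Matching policy for the 3-queue path graph: for every
occupancy vector `ζ` it serves only nonempty queues, no two adjacent queues, and the number
of queues served is the maximum cardinality of a non-adjacent subset of the nonempty queues. -/
def IsMSMmap (g : (Fin 3 → Bool) → Finset (Fin 3)) : Prop :=
  ∀ ζ : Fin 3 → Bool,
    (∀ i ∈ g ζ, ζ i = true) ∧
    NoTwoAdjacent (g ζ) ∧
    IsGreatest {k : ℕ | ∃ T : Finset (Fin 3),
      (∀ i ∈ T, ζ i = true) ∧ NoTwoAdjacent T ∧ T.card = k} (g ζ).card

instance : DecidablePred NoTwoAdjacent := fun T => by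
  unfold NoTwoAdjacent; infer_instance

def validB (ζ : Fin 3 → Bool) (T : Finset (Fin 3)) : Prop :=
  (∀ i ∈ T, ζ i = true) ∧ NoTwoAdjacent T ∧
    ∀ S : Finset (Fin 3), (∀ i ∈ S, ζ i = true) → NoTwoAdjacent S → S.card ≤ T.card

instance (ζ : Fin 3 → Bool) : DecidablePred (validB ζ) := fun T => by
  unfold validB; infer_instance

lemma isMSMmap_iff (g : (Fin 3 → Bool) → Finset (Fin 3)) :
    IsMSMmap g ↔ ∀ ζ, validB ζ (g ζ) := by
  constructor
  · intro h ζ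
    obtain ⟨h1, h2, ⟨-, hub⟩⟩ := h ζ
    exact ⟨h1, h2, fun S hS1 hS2 => hub ⟨S, hS1, hS2, rfl⟩⟩
  · intro h ζ
    obtain ⟨h1, h2, h3⟩ := h ζ
    refine ⟨h1, h2, ⟨g ζ, h1, h2, rfl⟩, ?_⟩
    rintro k ⟨S, hS1, hS2, rfl⟩
    exact h3 S hS1 hS2

/-- There are exactly 4 queue-nonemptiness-based MSM policies on the 3-queue path graph. -/
theorem card_MSM_policies_three_queues :
    Nat.card {g : (Fin 3 → Bool) → Finset (Fin 3) // IsMSMmap g} = 4 := by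
  have e1 : {g : (Fin 3 → Bool) → Finset (Fin 3) // IsMSMmap g} ≃
      ∀ ζ : Fin 3 → Bool, {T : Finset (Fin 3) // validB ζ T} :=
    (Equiv.subtypeEquivRight isMSMmap_iff).trans (Equiv.subtypePiEquivPi)
  rw [Nat.card_congr e1, Nat.card_pi]
  have h : ∀ ζ : Fin 3 → Bool, Nat.card {T : Finset (Fin 3) // validB ζ T}
      = (Finset.univ.filter (validB ζ)).card := fun ζ => by
    rw [Nat.card_eq_fintype_card, Fintype.card_subtype]
  simp_rw [h]
  decide
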